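/- Let Θ₁, Θ₂, Λ be frames of a family of compatible frames with Θ₁ ⊥ Θ₂ | Λ, and let p₁, p₂, p be probability potentials with d(p₁) = Θ₁, d(p₂) = Θ₂ and d(p) = Λ. Then π_Λ(p₁ · p₂ · p) = π_Λ(p₁) · π_Λ(p₂) · p. -/
import Mathlib


open scoped NNReal

/-- A family of compatible frames (f.c.f.): a collection of finite nonempty frames
together with (unique) refinings between them, closed under composition, containing
identities, with minimal common refinements (binary joins). -/
structure FCF where
  /-- the frames of the family -/
  Frame : Type
  /-- the elements of each frame -/
  El : Frame → Type
  elFintype : ∀ Θ, Fintype (El Θ)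
  elNonempty : ∀ Θ, Nonempty (El Θ)
  /-- `le Θ Λ` holds iff the family contains a refining of `Θ` to `Λ`. -/
  le : Frame → Frame → Prop
  le_refl : ∀ Θ, le Θ Θ
  le_trans : ∀ {Θ Λ Ξ}, le Θ Λ → le Λ Ξ → le Θ Ξ
  le_antisymm : ∀ {Θ Λ}, le Θ Λ → le Λ Θ → Θ = Λ
  /-- the (unique) refining map of `Θ` to `Λ`, when `le Θ Λ` -/
  τ : ∀ {Θ Λ}, le Θ Λ → El Θ → Set (El Λ)
  τ_nonempty : ∀ {Θ Λ} (h : le Θ Λ) (θ : El Θ), (τ h θ).Nonempty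
  τ_disjoint : ∀ {Θ Λ} (h : le Θ Λ) (θ θ' : El Θ), θ ≠ θ' → τ h θ ∩ τ h θ' = ∅
  τ_cover : ∀ {Θ Λ} (h : le Θ Λ) (x : El Λ), ∃ θ, x ∈ τ h θ
  /-- the identity refining -/
  τ_refl : ∀ {Θ} (h : le Θ Θ) (θ : El Θ), τ h θ = {θ}
  /-- closure under composition of refinings -/
  τ_comp : ∀ {Θ Λ Ξ} (h₁ : le Θ Λ) (h₂ : le Λ Ξ) (h₃ : le Θ Ξ) (θ : El Θ),
    τ h₃ θ = ⋃ lam ∈ τ h₁ θ, τ h₂ lam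
  /-- identity of coarsenings: two coarsenings of a frame with the same blocks coincide -/
  coarsening_unique : ∀ {Θ₁ Θ₂ Λ} (h₁ : le Θ₁ Λ) (h₂ : le Θ₂ Λ),
    (∀ θ₁, ∃ θ₂, τ h₁ θ₁ = τ h₂ θ₂) → (∀ θ₂, ∃ θ₁, τ h₁ θ₁ = τ h₂ θ₂) → Θ₁ = Θ₂
  /-- minimal common refinement of two frames -/
  sup : Frame → Frame → Frame
  le_sup_left : ∀ Θ Λ, le Θ (sup Θ Λ)
  le_sup_right : ∀ Θ Λ, le Λ (sup Θ Λ)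
  sup_le : ∀ {Θ Λ Ξ}, le Θ Ξ → le Λ Ξ → le (sup Θ Λ) Ξ
  /-- every element of the minimal common refinement is the (unique) intersection point
  of a block of each factor -/
  sup_atom : ∀ {Θ Λ} (h₁ : le Θ (sup Θ Λ)) (h₂ : le Λ (sup Θ Λ)) (x : El (sup Θ Λ)),
    ∃ (θ : El Θ) (lam : El Λ), τ h₁ θ ∩ τ h₂ lam = {x}

namespace FCF

instance (F : FCF) (Θ : F.Frame) : Fintype (F.El Θ) := F.elFintype Θ

instance (F : FCF) (Θ : F.Frame) : Nonempty (F.El Θ) := F.elNonempty Θ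

instance instSemilatticeSup (F : FCF) : SemilatticeSup F.Frame where
  le := F.le
  le_refl := F.le_refl
  le_trans := fun _ _ _ => F.le_trans
  le_antisymm := fun _ _ => F.le_antisymm
  sup := F.sup
  le_sup_left := F.le_sup_left
  le_sup_right := F.le_sup_right
  sup_le := fun _ _ _ h h' => F.sup_le h h'

/-- the indicator potential `f_p` of the support of a potential -/
noncomputable def fpot {X : Type} (p : X → ℝ≥0) : X → ℝ≥0 := fun x =>
  haveI := Classical.propDecidable (0 < p x)
  if 0 < p x then 1 else 0

/-- the support of a potential -/
def psupp {X : Type} (p : X → ℝ≥0) : Set X := {x | 0 < p x}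

/-- the likelihood (plausibility of singletons) function of a set potential -/
noncomputable def plfn {X : Type} (m : Set X → ℝ≥0) : X → ℝ≥0 :=
  fun x => ∑ᶠ (S : Set X) (_ : x ∈ S), m S

variable (F : FCF)

/-- `θ` and `lam` are compatible: their refinings to the minimal common refinement
of the two frames intersect. -/
def compat {Θ Λ : F.Frame} (θ : F.El Θ) (lam : F.El Λ) : Prop :=
  (F.τ (F.le_sup_left Θ Λ) θ ∩ F.τ (F.le_sup_right Θ Λ) lam).Nonempty

/-- `(θ₁, θ₂, lam) ∈ R(Θ₁, Θ₂, Λ)`: joint compatibility of a triple. -/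
def compat3 {Θ₁ Θ₂ Λ : F.Frame} (θ₁ : F.El Θ₁) (θ₂ : F.El Θ₂) (lam : F.El Λ) : Prop :=
  (F.τ (F.le_trans (F.le_sup_left Θ₁ Θ₂) (F.le_sup_left (F.sup Θ₁ Θ₂) Λ)) θ₁ ∩
    F.τ (F.le_trans (F.le_sup_right Θ₁ Θ₂) (F.le_sup_left (F.sup Θ₁ Θ₂) Λ)) θ₂ ∩
    F.τ (F.le_sup_right (F.sup Θ₁ Θ₂) Λ) lam).Nonempty

/-- `Θ₁ ⊥ Θ₂ | Λ` : conditional independence of two frames given a third,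
`R_λ(Θ₁,Θ₂) = R_λ(Θ₁) × R_λ(Θ₂)` for every `λ ∈ Λ`. -/
def CondIndep (Θ₁ Θ₂ Λ : F.Frame) : Prop :=
  ∀ (lam : F.El Λ) (θ₁ : F.El Θ₁) (θ₂ : F.El Θ₂),
    F.compat3 θ₁ θ₂ lam ↔ (F.compat θ₁ lam ∧ F.compat θ₂ lam)

/-- joint compatibility of a family of elements together with `lam`. -/
def compatFam {ι : Type} {Θ : ι → F.Frame} {Λ : F.Frame}
    (θ : ∀ i, F.El (Θ i)) (lam : F.El Λ) : Prop :=
  ∃ (Ξ : F.Frame) (hΘ : ∀ i, F.le (Θ i) Ξ) (hΛ : F.le Λ Ξ) (x : F.El Ξ),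
    (∀ i, x ∈ F.τ (hΘ i) (θ i)) ∧ x ∈ F.τ hΛ lam

/-- `⊥ {Θ_i : i ∈ ι} | Λ` : conditional independence of a family of frames given `Λ`,
`R_λ(Θ₁,…,Θₙ) = R_λ(Θ₁) × ⋯ × R_λ(Θₙ)` for every `λ ∈ Λ`. -/
def CondIndepFam {ι : Type} (Θ : ι → F.Frame) (Λ : F.Frame) : Prop :=
  ∀ (lam : F.El Λ) (θ : ∀ i, F.El (Θ i)),
    F.compatFam θ lam ↔ ∀ i, F.compat (θ i) lam

/-- `t_Λ(x)`, the unique element of the coarsening `Λ` whose block contains `x`. -/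
noncomputable def proj {Λ Θ : F.Frame} (h : F.le Λ Θ) (x : F.El Θ) : F.El Λ :=
  (F.τ_cover h x).choose

/-- probability potentials on the frame `Θ` -/
abbrev Pot (Θ : F.Frame) : Type := F.El Θ → ℝ≥0

/-- the combination of two probability potentials, on the join of their domains -/
noncomputable def combine {Θ₁ Θ₂ : F.Frame} (p₁ : F.Pot Θ₁) (p₂ : F.Pot Θ₂) :
    F.Pot (F.sup Θ₁ Θ₂) :=
  fun x => p₁ (F.proj (F.le_sup_left Θ₁ Θ₂) x) * p₂ (F.proj (F.le_sup_right Θ₁ Θ₂) x)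

/-- the transport `π_Λ(p)` of a probability potential to the frame `Λ` -/
noncomputable def transport {Θ : F.Frame} (p : F.Pot Θ) (Λ : F.Frame) : F.Pot Λ :=
  fun lam => ∑ᶠ (θ : F.El Θ) (_ : F.compat θ lam), p θ

/-- the max-transport `t^max_Λ(p)` of a probability potential to the frame `Λ` -/
noncomputable def maxTransport {Θ : F.Frame} (p : F.Pot Θ) (Λ : F.Frame) : F.Pot Λ :=
  fun lam => ⨆ (θ : F.El Θ) (_ : F.compat θ lam), p θ

/-- combination of two set potentials, on the join of their domains -/
noncomputable def setCombine {Θ₁ Θ₂ : F.Frame} (m₁ : Set (F.El Θ₁) → ℝ≥0)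
    (m₂ : Set (F.El Θ₂) → ℝ≥0) : Set (F.El (F.sup Θ₁ Θ₂)) → ℝ≥0 :=
  fun S => ∑ᶠ (S₁ : Set (F.El Θ₁)) (S₂ : Set (F.El Θ₂))
    (_ : (⋃ θ ∈ S₁, F.τ (F.le_sup_left Θ₁ Θ₂) θ) ∩
         (⋃ θ ∈ S₂, F.τ (F.le_sup_right Θ₁ Θ₂) θ) = S),
    m₁ S₁ * m₂ S₂

/-- the conditional `p_{Θ|Λ} = π_Θ(p) · (π_Λ(p))⁻¹` of `p` for `Θ` given `Λ ≤ Θ` -/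
noncomputable def condl {Δ : F.Frame} (p : F.Pot Δ) {Λ Θ : F.Frame} (h : F.le Λ Θ) :
    F.Pot Θ :=
  fun θ => F.transport p Θ θ * (F.transport p Λ (F.proj h θ))⁻¹

/-- the conditional `p_{Θ|Λ} = π_{Θ∨Λ}(p) · (π_Λ(p))⁻¹` of `p` for arbitrary `Θ` given `Λ` -/
noncomputable def condl2 {Δ : F.Frame} (p : F.Pot Δ) (Θ Λ : F.Frame) :
    F.Pot (F.sup Θ Λ) :=
  fun x => F.transport p (F.sup Θ Λ) x *
    (F.transport p Λ (F.proj (F.le_sup_right Θ Λ) x))⁻¹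

/-- the solution set `s_p^Λ(lam)`: maximizers of `p` among elements compatible with `lam` -/
noncomputable def solSet {Θ : F.Frame} (p : F.Pot Θ) (Λ : F.Frame) (lam : F.El Λ) :
    Set (F.El Θ) :=
  {θ | F.compat θ lam ∧ p θ = F.maxTransport p Λ lam}

end FCF

namespace FCF

variable (F : FCF)

lemma mem_τ_inj {Θ Λ : F.Frame} (h : F.le Θ Λ) {x : F.El Λ} {θ θ' : F.El Θ}
    (hx : x ∈ F.τ h θ) (hx' : x ∈ F.τ h θ') : θ = θ' := by
  by_contra hne
  have hd := F.τ_disjoint h θ θ' hne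
  have : x ∈ F.τ h θ ∩ F.τ h θ' := ⟨hx, hx'⟩
  rw [hd] at this
  exact this

lemma mem_τ_proj {Θ Λ : F.Frame} (h : F.le Θ Λ) (x : F.El Λ) :
    x ∈ F.τ h (F.proj h x) := (F.τ_cover h x).choose_spec

lemma proj_eq {Θ Λ : F.Frame} (h : F.le Θ Λ) {x : F.El Λ} {θ : F.El Θ}
    (hx : x ∈ F.τ h θ) : F.proj h x = θ :=
  F.mem_τ_inj h (F.mem_τ_proj h x) hx

lemma mem_τ_trans {A B C : F.Frame} (h₁ : F.le A B) (h₂ : F.le B C) (h₃ : F.le A C)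
    {x : F.El C} {a : F.El A} (hx : x ∈ F.τ h₃ a) : F.proj h₂ x ∈ F.τ h₁ a := by
  rw [F.τ_comp h₁ h₂ h₃ a] at hx
  simp only [Set.mem_iUnion] at hx
  obtain ⟨b, hb, hxb⟩ := hx
  rw [F.proj_eq h₂ hxb]
  exact hb

lemma mem_τ_trans' {A B C : F.Frame} (h₁ : F.le A B) (h₂ : F.le B C) (h₃ : F.le A C)
    {x : F.El C} {a : F.El A} (hx : F.proj h₂ x ∈ F.τ h₁ a) : x ∈ F.τ h₃ a := by
  rw [F.τ_comp h₁ h₂ h₃ a]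
  simp only [Set.mem_iUnion]
  exact ⟨F.proj h₂ x, hx, F.mem_τ_proj h₂ x⟩

lemma proj_proj {A B C : F.Frame} (h₁ : F.le A B) (h₂ : F.le B C) (h₃ : F.le A C)
    (x : F.El C) : F.proj h₁ (F.proj h₂ x) = F.proj h₃ x :=
  F.proj_eq h₁ (F.mem_τ_trans h₁ h₂ h₃ (F.mem_τ_proj h₃ x))

lemma compat_iff_mem {Λ Ξ : F.Frame} (h : F.le Λ Ξ) (x : F.El Ξ) (lam : F.El Λ) :
    F.compat x lam ↔ x ∈ F.τ h lam := by
  have hcomp := F.τ_comp h (F.le_sup_left Ξ Λ) (F.le_sup_right Ξ Λ) lam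
  constructor
  · rintro ⟨y, hy1, hy2⟩
    rw [hcomp] at hy2
    simp only [Set.mem_iUnion] at hy2
    obtain ⟨x', hx', hyx'⟩ := hy2
    rwa [F.mem_τ_inj (F.le_sup_left Ξ Λ) hy1 hyx']
  · intro hx
    obtain ⟨y, hy⟩ := F.τ_nonempty (F.le_sup_left Ξ Λ) x
    refine ⟨y, hy, ?_⟩
    rw [hcomp]
    simp only [Set.mem_iUnion]
    exact ⟨x, hx, hy⟩

lemma sup_inter_subsingleton {A B : F.Frame} {a : F.El A} {b : F.El B}
    {x y : F.El (F.sup A B)}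
    (hxa : x ∈ F.τ (F.le_sup_left A B) a) (hxb : x ∈ F.τ (F.le_sup_right A B) b)
    (hya : y ∈ F.τ (F.le_sup_left A B) a) (hyb : y ∈ F.τ (F.le_sup_right A B) b) :
    x = y := by
  obtain ⟨a', b', hab⟩ := F.sup_atom (F.le_sup_left A B) (F.le_sup_right A B) x
  have hx : x ∈ F.τ (F.le_sup_left A B) a' ∩ F.τ (F.le_sup_right A B) b' := by
    rw [hab]; rfl
  have ha : a' = a := F.mem_τ_inj _ hx.1 hxa
  have hb : b' = b := F.mem_τ_inj _ hx.2 hxb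
  subst ha; subst hb
  have : y ∈ ({x} : Set _) := by rw [← hab]; exact ⟨hya, hyb⟩
  exact this.symm

lemma triple_unique {Θ₁ Θ₂ Λ : F.Frame} {θ₁ : F.El Θ₁} {θ₂ : F.El Θ₂} {lam : F.El Λ}
    {x y : F.El (F.sup (F.sup Θ₁ Θ₂) Λ)}
    (hx1 : x ∈ F.τ (F.le_trans (F.le_sup_left Θ₁ Θ₂) (F.le_sup_left (F.sup Θ₁ Θ₂) Λ)) θ₁)
    (hx2 : x ∈ F.τ (F.le_trans (F.le_sup_right Θ₁ Θ₂) (F.le_sup_left (F.sup Θ₁ Θ₂) Λ)) θ₂)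
    (hxl : x ∈ F.τ (F.le_sup_right (F.sup Θ₁ Θ₂) Λ) lam)
    (hy1 : y ∈ F.τ (F.le_trans (F.le_sup_left Θ₁ Θ₂) (F.le_sup_left (F.sup Θ₁ Θ₂) Λ)) θ₁)
    (hy2 : y ∈ F.τ (F.le_trans (F.le_sup_right Θ₁ Θ₂) (F.le_sup_left (F.sup Θ₁ Θ₂) Λ)) θ₂)
    (hyl : y ∈ F.τ (F.le_sup_right (F.sup Θ₁ Θ₂) Λ) lam) : x = y := by
  have hm1x := F.mem_τ_trans (F.le_sup_left Θ₁ Θ₂) (F.le_sup_left (F.sup Θ₁ Θ₂) Λ) _ hx1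
  have hm2x := F.mem_τ_trans (F.le_sup_right Θ₁ Θ₂) (F.le_sup_left (F.sup Θ₁ Θ₂) Λ) _ hx2
  have hm1y := F.mem_τ_trans (F.le_sup_left Θ₁ Θ₂) (F.le_sup_left (F.sup Θ₁ Θ₂) Λ) _ hy1
  have hm2y := F.mem_τ_trans (F.le_sup_right Θ₁ Θ₂) (F.le_sup_left (F.sup Θ₁ Θ₂) Λ) _ hy2
  have hm : F.proj (F.le_sup_left (F.sup Θ₁ Θ₂) Λ) x = F.proj (F.le_sup_left (F.sup Θ₁ Θ₂) Λ) y :=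
    F.sup_inter_subsingleton hm1x hm2x hm1y hm2y
  have hxm : x ∈ F.τ (F.le_sup_left (F.sup Θ₁ Θ₂) Λ) (F.proj (F.le_sup_left (F.sup Θ₁ Θ₂) Λ) x) :=
    F.mem_τ_proj _ x
  have hym : y ∈ F.τ (F.le_sup_left (F.sup Θ₁ Θ₂) Λ) (F.proj (F.le_sup_left (F.sup Θ₁ Θ₂) Λ) x) := by
    rw [hm]; exact F.mem_τ_proj _ y
  exact F.sup_inter_subsingleton hxm hxl hym hyl

/-- If `Θ₁ ⊥ Θ₂ | Λ` and `d(p₁) = Θ₁`, `d(p₂) = Θ₂`, `d(p) = Λ`,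
then `π_Λ(p₁ · p₂ · p) = π_Λ(p₁) · π_Λ(p₂) · p`. -/
theorem transport_combine_combine (F : FCF) (Θ₁ Θ₂ Λ : F.Frame)
    (hCI : F.CondIndep Θ₁ Θ₂ Λ) (p₁ : F.Pot Θ₁) (p₂ : F.Pot Θ₂) (p : F.Pot Λ) :
    F.transport (F.combine (F.combine p₁ p₂) p) Λ =
      fun lam => F.transport p₁ Λ lam * F.transport p₂ Λ lam * p lam := by
  classical
  set M := F.sup Θ₁ Θ₂ with hM
  set Ξ := F.sup M Λ with hΞ
  have h1M : F.le Θ₁ M := F.le_sup_left Θ₁ Θ₂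
  have h2M : F.le Θ₂ M := F.le_sup_right Θ₁ Θ₂
  have hMΞ : F.le M Ξ := F.le_sup_left M Λ
  have hΛΞ : F.le Λ Ξ := F.le_sup_right M Λ
  have h1Ξ : F.le Θ₁ Ξ := F.le_trans h1M hMΞ
  have h2Ξ : F.le Θ₂ Ξ := F.le_trans h2M hMΞ
  funext lam
  -- Finset versions of the index sets
  set s₀ : Finset (F.El Ξ) := Finset.univ.filter (fun x => x ∈ F.τ hΛΞ lam) with hs₀
  set s₁ : Finset (F.El Θ₁) := Finset.univ.filter (fun θ₁ => F.compat θ₁ lam) with hs₁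
  set s₂ : Finset (F.El Θ₂) := Finset.univ.filter (fun θ₂ => F.compat θ₂ lam) with hs₂
  have hL : F.transport (F.combine (F.combine p₁ p₂) p) Λ lam =
      ∑ x ∈ s₀, F.combine (F.combine p₁ p₂) p x := by
    refine finsum_cond_eq_sum_of_cond_iff _ ?_
    intro x _
    simp only [hs₀, Finset.mem_filter, Finset.mem_univ, true_and]
    exact F.compat_iff_mem hΛΞ x lam
  have hR1 : F.transport p₁ Λ lam = ∑ θ₁ ∈ s₁, p₁ θ₁ := by
    refine finsum_cond_eq_sum_of_cond_iff _ ?_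
    intro θ₁ _
    simp [hs₁]
  have hR2 : F.transport p₂ Λ lam = ∑ θ₂ ∈ s₂, p₂ θ₂ := by
    refine finsum_cond_eq_sum_of_cond_iff _ ?_
    intro θ₂ _
    simp [hs₂]
  rw [hL, hR1, hR2]
  -- rewrite the combined potential on s₀
  have hq : ∀ x ∈ s₀, F.combine (F.combine p₁ p₂) p x =
      p₁ (F.proj h1Ξ x) * p₂ (F.proj h2Ξ x) * p lam := by
    intro x hx
    simp only [hs₀, Finset.mem_filter, Finset.mem_univ, true_and] at hx
    have hplam : F.proj (F.le_sup_right M Λ) x = lam := F.proj_eq hΛΞ hx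
    show (F.combine p₁ p₂) (F.proj (F.le_sup_left M Λ) x) *
        p (F.proj (F.le_sup_right M Λ) x) = _
    rw [hplam]
    show p₁ (F.proj h1M (F.proj (F.le_sup_left M Λ) x)) *
        p₂ (F.proj h2M (F.proj (F.le_sup_left M Λ) x)) * p lam = _
    rw [F.proj_proj h1M hMΞ h1Ξ, F.proj_proj h2M hMΞ h2Ξ]
  rw [Finset.sum_congr rfl hq, ← Finset.sum_mul, Finset.sum_mul_sum]
  congr 1
  rw [← Finset.sum_product']
  -- the bijection between s₀ and s₁ ×ˢ s₂
  refine Finset.sum_nbij' (fun x => (F.proj h1Ξ x, F.proj h2Ξ x))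
    (fun pr => if h : F.compat3 pr.1 pr.2 lam then h.choose else Classical.arbitrary _)
    ?_ ?_ ?_ ?_ ?_
  · intro x hx
    simp only [hs₀, Finset.mem_filter, Finset.mem_univ, true_and] at hx
    have h3 : F.compat3 (F.proj h1Ξ x) (F.proj h2Ξ x) lam :=
      ⟨x, ⟨F.mem_τ_proj h1Ξ x, F.mem_τ_proj h2Ξ x⟩, hx⟩
    have := (hCI lam _ _).mp h3
    simp only [Finset.mem_product, hs₁, hs₂, Finset.mem_filter, Finset.mem_univ, true_and]
    exact this
  · rintro ⟨θ₁, θ₂⟩ hpr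
    simp only [Finset.mem_product, hs₁, hs₂, Finset.mem_filter, Finset.mem_univ,
      true_and] at hpr
    have h3 : F.compat3 θ₁ θ₂ lam := (hCI lam θ₁ θ₂).mpr ⟨hpr.1, hpr.2⟩
    simp only [h3, dif_pos]
    have hc := h3.choose_spec
    simp only [hs₀, Finset.mem_filter, Finset.mem_univ, true_and]
    exact hc.2
  · intro x hx
    simp only [hs₀, Finset.mem_filter, Finset.mem_univ, true_and] at hx
    have h3 : F.compat3 (F.proj h1Ξ x) (F.proj h2Ξ x) lam :=
      ⟨x, ⟨F.mem_τ_proj h1Ξ x, F.mem_τ_proj h2Ξ x⟩, hx⟩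
    simp only [h3, dif_pos]
    have hc := h3.choose_spec
    exact F.triple_unique hc.1.1 hc.1.2 hc.2 (F.mem_τ_proj h1Ξ x) (F.mem_τ_proj h2Ξ x) hx
  · rintro ⟨θ₁, θ₂⟩ hpr
    simp only [Finset.mem_product, hs₁, hs₂, Finset.mem_filter, Finset.mem_univ,
      true_and] at hpr
    have h3 : F.compat3 θ₁ θ₂ lam := (hCI lam θ₁ θ₂).mpr ⟨hpr.1, hpr.2⟩
    simp only [h3, dif_pos]
    have hc := h3.choose_spec
    exact Prod.ext (F.proj_eq h1Ξ hc.1.1) (F.proj_eq h2Ξ hc.1.2)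
  · intro x _
    rfl

end FCF
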